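/- arXiv:2106.07491 — 2 statements merged into one kernel-verified Lean document; each statement's English description precedes it below -/
import Mathlib

section
/- Under the hypotheses of the previous interconnection inequality and for any positive constants γ₁, γ₂, γ₃, γ₄, there exists a constant β̂ such that for all T ≥ 0: c₁‖y₁‖²_{2,T} + c₂‖y₂‖²_{2,T} ≤ c₃‖r₁‖²_{2,T} + c₄‖r₂‖²_{2,T} + β̂, where c₁ = (δ₁+ε₂) − γ₁/2 − ε₂γ₄, c₂ = (δ₂+ε₁) − γ₂/2 − ε₁γ₃, c₃ = 1/(2γ₁) + ε₁/γ₃, c₄ = 1/(2γ₂) + ε₂/γ₄. -/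
/-!
Summing the two IOSP inequalities, the interconnection cancels the cross terms `∓⟪y₂, y₁⟫`, so the
energy supplied to the subsystems equals `⟨y₁|r₁⟩_T + ⟨y₂|r₂⟩_T`. Young's inequality with weights
`γ₁, γ₂` bounds this by the energies of `rᵢ` and `yᵢ`; Young's inequality with weights `γ₃, γ₄`
bounds the input energies from below, `‖u₁‖² ≥ (1 - γ₃)‖y₂‖² - ‖r₁‖² / γ₃` and likewise for `u₂`,
and these lower bounds enter with the factors `εᵢ ≥ 0`. The constant is `β̂ = β₁ + β₂`.
-/

open MeasureTheory intervalIntegral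

section InnerProductSpace

variable {E : Type*} [NormedAddCommGroup E] [InnerProductSpace ℝ E]

theorem real_inner_le_young {γ : ℝ} (hγ : 0 < γ) (a b : E) :
    inner ℝ a b ≤ 1 / (2 * γ) * ‖a‖ ^ 2 + γ / 2 * ‖b‖ ^ 2 := by
  have hsplit : 1 / (2 * γ) * ‖a‖ ^ 2 + γ / 2 * ‖b‖ ^ 2 =
      ‖a‖ * ‖b‖ + (‖a‖ - γ * ‖b‖) ^ 2 / (2 * γ) := by
    field_simp
    ring
  rw [hsplit]
  exact (real_inner_le_norm a b).trans (le_add_of_nonneg_right (by positivity))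

theorem sub_mul_norm_sq_le_norm_sub_sq {γ : ℝ} (hγ : 0 < γ) (a b : E) :
    (1 - γ) * ‖b‖ ^ 2 - γ⁻¹ * ‖a‖ ^ 2 ≤ ‖a - b‖ ^ 2 := by
  rw [norm_sub_sq_real]
  linear_combination 2 * real_inner_le_young hγ a b + sq_nonneg ‖a‖

theorem sub_mul_norm_sq_le_norm_add_sq {γ : ℝ} (hγ : 0 < γ) (a b : E) :
    (1 - γ) * ‖b‖ ^ 2 - γ⁻¹ * ‖a‖ ^ 2 ≤ ‖a + b‖ ^ 2 := by
  simpa only [norm_neg, sub_neg_eq_add] using sub_mul_norm_sq_le_norm_sub_sq hγ a (-b)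

theorem inner_add_inner_eq_of_feedback {u₁ u₂ y₁ y₂ r₁ r₂ : E}
    (hu₁ : u₁ = r₁ - y₂) (hu₂ : u₂ = r₂ + y₁) :
    inner ℝ u₁ y₁ + inner ℝ u₂ y₂ = inner ℝ r₁ y₁ + inner ℝ r₂ y₂ := by
  rw [hu₁, hu₂, inner_sub_left, inner_add_left, real_inner_comm y₂ y₁]
  ring

end InnerProductSpace

namespace intervalIntegral

variable {μ : Measure ℝ} {a b c d : ℝ} {F G H : ℝ → ℝ}

theorem integral_le_mul_integral_add_mul_integral (hab : a ≤ b)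
    (hF : IntervalIntegrable F μ a b) (hG : IntervalIntegrable G μ a b)
    (hH : IntervalIntegrable H μ a b) (h : ∀ t ∈ Set.Icc a b, F t ≤ c * G t + d * H t) :
    ∫ t in a..b, F t ∂μ ≤ c * ∫ t in a..b, G t ∂μ + d * ∫ t in a..b, H t ∂μ := by
  rw [← integral_const_mul, ← integral_const_mul, ← integral_add (hG.const_mul c) (hH.const_mul d)]
  exact integral_mono_on hab hF ((hG.const_mul c).add (hH.const_mul d)) h

theorem mul_integral_sub_mul_integral_le_integral (hab : a ≤ b)
    (hF : IntervalIntegrable F μ a b) (hG : IntervalIntegrable G μ a b)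
    (hH : IntervalIntegrable H μ a b) (h : ∀ t ∈ Set.Icc a b, c * G t - d * H t ≤ F t) :
    c * ∫ t in a..b, G t ∂μ - d * ∫ t in a..b, H t ∂μ ≤ ∫ t in a..b, F t ∂μ := by
  rw [← integral_const_mul, ← integral_const_mul, ← integral_sub (hG.const_mul c) (hH.const_mul d)]
  exact integral_mono_on hab ((hG.const_mul c).sub (hH.const_mul d)) hF h

theorem integral_inner_add_integral_inner_eq_of_feedback {E : Type*} [NormedAddCommGroup E]
    [InnerProductSpace ℝ E] {u₁ u₂ y₁ y₂ r₁ r₂ : ℝ → E}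
    (hu₁ : ∀ t, u₁ t = r₁ t - y₂ t) (hu₂ : ∀ t, u₂ t = r₂ t + y₁ t)
    (hu₁y₁ : IntervalIntegrable (fun t => inner ℝ (u₁ t) (y₁ t)) μ a b)
    (hu₂y₂ : IntervalIntegrable (fun t => inner ℝ (u₂ t) (y₂ t)) μ a b)
    (hr₁y₁ : IntervalIntegrable (fun t => inner ℝ (r₁ t) (y₁ t)) μ a b)
    (hr₂y₂ : IntervalIntegrable (fun t => inner ℝ (r₂ t) (y₂ t)) μ a b) :
    (∫ t in a..b, inner ℝ (u₁ t) (y₁ t) ∂μ) + ∫ t in a..b, inner ℝ (u₂ t) (y₂ t) ∂μ =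
      (∫ t in a..b, inner ℝ (r₁ t) (y₁ t) ∂μ) + ∫ t in a..b, inner ℝ (r₂ t) (y₂ t) ∂μ := by
  rw [← integral_add hu₁y₁ hu₂y₂, ← integral_add hr₁y₁ hr₂y₂]
  exact integral_congr fun t _ => inner_add_inner_eq_of_feedback (hu₁ t) (hu₂ t)

end intervalIntegral

theorem iosp_interconnection_output_bound_general (n : ℕ)
    (u₁ u₂ y₁ y₂ r₁ r₂ : ℝ → EuclideanSpace ℝ (Fin n))
    (ε₁ ε₂ δ₁ δ₂ β₁ β₂ : ℝ)
    (hε₁ : 0 ≤ ε₁) (hε₂ : 0 ≤ ε₂)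
    (hu₁ : ∀ t, u₁ t = r₁ t - y₂ t)
    (hu₂ : ∀ t, u₂ t = r₂ t + y₁ t)
    (hint : ∀ (f g : ℝ → EuclideanSpace ℝ (Fin n)),
      (f = u₁ ∨ f = u₂ ∨ f = y₁ ∨ f = y₂ ∨ f = r₁ ∨ f = r₂) →
      (g = u₁ ∨ g = u₂ ∨ g = y₁ ∨ g = y₂ ∨ g = r₁ ∨ g = r₂) →
      ∀ T : ℝ, IntervalIntegrable (fun t => (inner ℝ (f t) (g t) : ℝ)) volume 0 T)
    (hIOSP₁ : ∀ T : ℝ, 0 ≤ T →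
      (∫ t in (0:ℝ)..T, (inner ℝ (u₁ t) (y₁ t) : ℝ)) ≥
        ε₁ * (∫ t in (0:ℝ)..T, ‖u₁ t‖ ^ 2) + δ₁ * (∫ t in (0:ℝ)..T, ‖y₁ t‖ ^ 2) - β₁)
    (hIOSP₂ : ∀ T : ℝ, 0 ≤ T →
      (∫ t in (0:ℝ)..T, (inner ℝ (u₂ t) (y₂ t) : ℝ)) ≥
        ε₂ * (∫ t in (0:ℝ)..T, ‖u₂ t‖ ^ 2) + δ₂ * (∫ t in (0:ℝ)..T, ‖y₂ t‖ ^ 2) - β₂)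
    (γ₁ γ₂ γ₃ γ₄ : ℝ) (hγ₁ : 0 < γ₁) (hγ₂ : 0 < γ₂) (hγ₃ : 0 < γ₃) (hγ₄ : 0 < γ₄) :
    ∃ βhat : ℝ, ∀ T : ℝ, 0 ≤ T →
      ((δ₁ + ε₂) - γ₁ / 2 - ε₂ * γ₄) * (∫ t in (0:ℝ)..T, ‖y₁ t‖ ^ 2) +
        ((δ₂ + ε₁) - γ₂ / 2 - ε₁ * γ₃) * (∫ t in (0:ℝ)..T, ‖y₂ t‖ ^ 2) ≤
      (1 / (2 * γ₁) + ε₁ / γ₃) * (∫ t in (0:ℝ)..T, ‖r₁ t‖ ^ 2) +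
        (1 / (2 * γ₂) + ε₂ / γ₄) * (∫ t in (0:ℝ)..T, ‖r₂ t‖ ^ 2) + βhat := by
  refine ⟨β₁ + β₂, fun T hT => ?_⟩
  have hsq : ∀ f, (f = u₁ ∨ f = u₂ ∨ f = y₁ ∨ f = y₂ ∨ f = r₁ ∨ f = r₂) →
      IntervalIntegrable (fun t => ‖f t‖ ^ 2) volume 0 T := fun f hf => by
    simpa only [real_inner_self_eq_norm_sq] using hint f f hf hf T
  have hloss := integral_inner_add_integral_inner_eq_of_feedback hu₁ hu₂
    (hint u₁ y₁ (by simp) (by simp) T) (hint u₂ y₂ (by simp) (by simp) T)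
    (hint r₁ y₁ (by simp) (by simp) T) (hint r₂ y₂ (by simp) (by simp) T)
  have hr₁y₁ := integral_le_mul_integral_add_mul_integral hT (hint r₁ y₁ (by simp) (by simp) T)
    (hsq r₁ (by simp)) (hsq y₁ (by simp)) fun t _ => real_inner_le_young hγ₁ (r₁ t) (y₁ t)
  have hr₂y₂ := integral_le_mul_integral_add_mul_integral hT (hint r₂ y₂ (by simp) (by simp) T)
    (hsq r₂ (by simp)) (hsq y₂ (by simp)) fun t _ => real_inner_le_young hγ₂ (r₂ t) (y₂ t)
  have hu₁_sq := mul_integral_sub_mul_integral_le_integral hT (hsq u₁ (by simp))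
    (hsq y₂ (by simp)) (hsq r₁ (by simp))
    fun t _ => (hu₁ t).symm ▸ sub_mul_norm_sq_le_norm_sub_sq hγ₃ (r₁ t) (y₂ t)
  have hu₂_sq := mul_integral_sub_mul_integral_le_integral hT (hsq u₂ (by simp))
    (hsq y₁ (by simp)) (hsq r₂ (by simp))
    fun t _ => (hu₂ t).symm ▸ sub_mul_norm_sq_le_norm_add_sq hγ₄ (r₂ t) (y₁ t)
  linear_combination hloss + hIOSP₁ T hT + hIOSP₂ T hT + hr₁y₁ + hr₂y₂ + ε₁ * hu₁_sq + ε₂ * hu₂_sq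

/-- Lemma 1 of the paper: bound on the outputs of the feedback interconnection of
two IOSP systems. -/
theorem iosp_interconnection_output_bound (n : ℕ)
    (u₁ u₂ y₁ y₂ r₁ r₂ : ℝ → EuclideanSpace ℝ (Fin n))
    (ε₁ ε₂ δ₁ δ₂ β₁ β₂ : ℝ)
    (hε₁ : 0 ≤ ε₁) (hε₂ : 0 ≤ ε₂) (hδ₁ : 0 ≤ δ₁) (hδ₂ : 0 ≤ δ₂)
    (hβ₁ : 0 ≤ β₁) (hβ₂ : 0 ≤ β₂)
    (hu₁ : ∀ t, u₁ t = r₁ t - y₂ t)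
    (hu₂ : ∀ t, u₂ t = r₂ t + y₁ t)
    (hint : ∀ (f g : ℝ → EuclideanSpace ℝ (Fin n)),
      (f = u₁ ∨ f = u₂ ∨ f = y₁ ∨ f = y₂ ∨ f = r₁ ∨ f = r₂) →
      (g = u₁ ∨ g = u₂ ∨ g = y₁ ∨ g = y₂ ∨ g = r₁ ∨ g = r₂) →
      ∀ T : ℝ, IntervalIntegrable (fun t => (inner ℝ (f t) (g t) : ℝ)) volume 0 T)
    (hIOSP₁ : ∀ T : ℝ, 0 ≤ T →
      (∫ t in (0:ℝ)..T, (inner ℝ (u₁ t) (y₁ t) : ℝ)) ≥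
        ε₁ * (∫ t in (0:ℝ)..T, ‖u₁ t‖ ^ 2) + δ₁ * (∫ t in (0:ℝ)..T, ‖y₁ t‖ ^ 2) - β₁)
    (hIOSP₂ : ∀ T : ℝ, 0 ≤ T →
      (∫ t in (0:ℝ)..T, (inner ℝ (u₂ t) (y₂ t) : ℝ)) ≥
        ε₂ * (∫ t in (0:ℝ)..T, ‖u₂ t‖ ^ 2) + δ₂ * (∫ t in (0:ℝ)..T, ‖y₂ t‖ ^ 2) - β₂)
    (γ₁ γ₂ γ₃ γ₄ : ℝ) (hγ₁ : 0 < γ₁) (hγ₂ : 0 < γ₂) (hγ₃ : 0 < γ₃) (hγ₄ : 0 < γ₄) :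
    ∃ βhat : ℝ, ∀ T : ℝ, 0 ≤ T →
      ((δ₁ + ε₂) - γ₁ / 2 - ε₂ * γ₄) * (∫ t in (0:ℝ)..T, ‖y₁ t‖ ^ 2) +
        ((δ₂ + ε₁) - γ₂ / 2 - ε₁ * γ₃) * (∫ t in (0:ℝ)..T, ‖y₂ t‖ ^ 2) ≤
      (1 / (2 * γ₁) + ε₁ / γ₃) * (∫ t in (0:ℝ)..T, ‖r₁ t‖ ^ 2) +
        (1 / (2 * γ₂) + ε₂ / γ₄) * (∫ t in (0:ℝ)..T, ‖r₂ t‖ ^ 2) + βhat :=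
  iosp_interconnection_output_bound_general n u₁ u₂ y₁ y₂ r₁ r₂ ε₁ ε₂ δ₁ δ₂ β₁ β₂ hε₁ hε₂ hu₁ hu₂
    hint hIOSP₁ hIOSP₂ γ₁ γ₂ γ₃ γ₄ hγ₁ hγ₂ hγ₃ hγ₄
end

section
/- Under the same time-varying system setup, assume additionally there exist constants λ̄ ≥ 0 and λ_C > 0 with ½𝒳ᵀP̄(t)𝒳 ≤ (λ̄/2)‖𝒳‖² and ‖ℭ(t)𝒳‖² ≥ λ_C‖𝒳‖² for all 𝒳 and t. Then ⟨y₂|u₂⟩_T ≥ −𝒱(0) − (λ̄/(2λ_C))‖y₂‖²_{2,T} for all T ≥ 0, i.e. the system has an output passivity shortfall of at most λ̄/(2λ_C). -/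
/-!
Along trajectories, `P𝔅 = ℭᵀ` turns the derivative of the storage `𝒱 = ½ 𝒳ᵀP𝒳` into
`½ 𝒳ᵀP̄𝒳 + u₂ᵀy₂ ≤ (λ̄/2)‖𝒳‖² + u₂ᵀy₂ ≤ (λ̄/(2λ_C))‖y₂‖² + u₂ᵀy₂`.
Integrating over `[0, T]` and dropping `𝒱(T) ≥ 0` (as `P(T)` is positive definite) gives the bound.
-/

open MeasureTheory Matrix

section Derivatives

variable {𝕜 : Type*} [NontriviallyNormedField 𝕜] {m n : Type*} [Fintype n] {t : 𝕜}

theorem HasDerivAt.dotProduct {x y : 𝕜 → n → 𝕜} {x' y' : n → 𝕜}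
    (hx : HasDerivAt x x' t) (hy : HasDerivAt y y' t) :
    HasDerivAt (fun s => x s ⬝ᵥ y s) (x' ⬝ᵥ y t + x t ⬝ᵥ y') t := by
  have := HasDerivAt.fun_sum (u := Finset.univ) fun i _ =>
    (hasDerivAt_pi.1 hx i).fun_mul (hasDerivAt_pi.1 hy i)
  simpa only [_root_.dotProduct, ← Finset.sum_add_distrib] using this

theorem HasDerivAt.mulVec {P : 𝕜 → Matrix m n 𝕜} {P' : Matrix m n 𝕜} {y : 𝕜 → n → 𝕜}
    {y' : n → 𝕜} (hP : ∀ i j, HasDerivAt (fun s => P s i j) (P' i j) t)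
    (hy : HasDerivAt y y' t) :
    HasDerivAt (fun s => P s *ᵥ y s) (P' *ᵥ y t + P t *ᵥ y') t :=
  hasDerivAt_pi.2 fun i => (hasDerivAt_pi.2 (hP i)).dotProduct hy

end Derivatives

theorem Matrix.IsSymm.dotProduct_mulVec_comm {R n : Type*} [CommSemiring R] [Fintype n]
    {P : Matrix n n R} (hP : P.IsSymm) (x y : n → R) :
    x ⬝ᵥ (P *ᵥ y) = y ⬝ᵥ (P *ᵥ x) := by
  rw [dotProduct_mulVec, ← mulVec_transpose, hP.eq, dotProduct_comm]

theorem hasDerivAt_dotProduct_mulVec_self_of_dynamics {n k : Type*} [Fintype n] [Fintype k]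
    {x : ℝ → n → ℝ} {P : ℝ → Matrix n n ℝ} {P' A : Matrix n n ℝ} {B : Matrix n k ℝ}
    {C : Matrix k n ℝ} {u : k → ℝ} {t : ℝ}
    (hsymm : (P t).IsSymm) (hPB : P t * B = Cᵀ)
    (hP : ∀ i j, HasDerivAt (fun s => P s i j) (P' i j) t)
    (hx : HasDerivAt x (A *ᵥ x t + B *ᵥ u) t) :
    HasDerivAt (fun s => x s ⬝ᵥ (P s *ᵥ x s))
      (x t ⬝ᵥ ((P' + P t * A + Aᵀ * P t) *ᵥ x t) + 2 * (u ⬝ᵥ (C *ᵥ x t))) t := by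
  refine (hx.dotProduct (hx.mulVec hP)).congr_deriv ?_
  have hPv : x t ⬝ᵥ (P t *ᵥ (A *ᵥ x t + B *ᵥ u))
      = x t ⬝ᵥ (P t * A) *ᵥ x t + u ⬝ᵥ C *ᵥ x t := by
    rw [mulVec_add, dotProduct_add, mulVec_mulVec, mulVec_mulVec, hPB,
      dotProduct_mulVec (x t) Cᵀ, vecMul_transpose, dotProduct_comm (C *ᵥ x t)]
  have hAP : x t ⬝ᵥ (Aᵀ * P t) *ᵥ x t = x t ⬝ᵥ (P t * A) *ᵥ x t := by
    rw [← mulVec_mulVec, ← mulVec_mulVec, dotProduct_mulVec, vecMul_transpose,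
      hsymm.dotProduct_mulVec_comm]
  rw [hsymm.dotProduct_mulVec_comm _ (x t), dotProduct_add, hPv, add_mulVec, add_mulVec,
    dotProduct_add, dotProduct_add, hAP]
  ring

theorem sub_le_integral_add_const_mul_integral {V V' s r : ℝ → ℝ} {a b c : ℝ} (hab : a ≤ b)
    (hV : ∀ t, HasDerivAt V (V' t) t) (hs : Continuous s) (hr : Continuous r)
    (hV' : ∀ t, V' t ≤ s t + c * r t) :
    V b - V a ≤ (∫ t in a..b, s t) + c * ∫ t in a..b, r t := by
  have hcr : Continuous fun t => c * r t := continuous_const.mul hr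
  rw [← intervalIntegral.integral_const_mul,
    ← intervalIntegral.integral_add (hs.intervalIntegrable a b) (hcr.intervalIntegrable a b)]
  exact intervalIntegral.sub_le_integral_of_hasDeriv_right_of_le hab
    (fun t _ => (hV t).continuousAt.continuousWithinAt) (fun t _ => (hV t).hasDerivWithinAt)
    (hs.add hcr).integrableOn_Icc (fun t _ => hV' t)

theorem div_two_mul_le_div_mul_of_mul_le {l lC a b : ℝ} (hl : 0 ≤ l) (hlC : 0 < lC)
    (h : lC * a ≤ b) : l / 2 * a ≤ l / (2 * lC) * b := by
  calc l / 2 * a = l / (2 * lC) * (lC * a) := by field_simp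
    _ ≤ l / (2 * lC) * b := by gcongr

theorem time_varying_passivity_shortfall_general (m p : ℕ)
    (𝔄 : ℝ → Matrix (Fin m) (Fin m) ℝ)
    (𝔅 : Matrix (Fin m) (Fin p) ℝ)
    (ℭ : ℝ → Matrix (Fin p) (Fin m) ℝ)
    (P P' : ℝ → Matrix (Fin m) (Fin m) ℝ)
    (hPsymm : ∀ t, (P t).IsSymm) (hPpos : ∀ t, (P t).PosDef)
    (hP' : ∀ i j t, HasDerivAt (fun s => P s i j) (P' t i j) t)
    (hPB : ∀ t, P t * 𝔅 = (ℭ t)ᵀ)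
    (lambar lamC : ℝ) (hlambar : 0 ≤ lambar) (hlamC : 0 < lamC)
    (hPbar : ∀ (t : ℝ) (x : Fin m → ℝ),
      x ⬝ᵥ ((P' t + P t * 𝔄 t + (𝔄 t)ᵀ * P t) *ᵥ x) ≤ lambar * (x ⬝ᵥ x))
    (hCbound : ∀ (t : ℝ) (x : Fin m → ℝ),
      lamC * (x ⬝ᵥ x) ≤ (ℭ t *ᵥ x) ⬝ᵥ (ℭ t *ᵥ x))
    (𝒳 : ℝ → (Fin m → ℝ)) (u₂ : ℝ → (Fin p → ℝ))
    (hC : Continuous ℭ)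
    (hu : Continuous u₂)
    (hdyn : ∀ t, HasDerivAt 𝒳 ((𝔄 t *ᵥ 𝒳 t) + (𝔅 *ᵥ u₂ t)) t)
    (y₂ : ℝ → (Fin p → ℝ)) (hy₂ : ∀ t, y₂ t = ℭ t *ᵥ 𝒳 t)
    (𝒱 : ℝ → ℝ) (h𝒱 : ∀ t, 𝒱 t = (1 / 2 : ℝ) * (𝒳 t ⬝ᵥ (P t *ᵥ 𝒳 t))) :
    ∀ T : ℝ, 0 ≤ T →
      (∫ t in (0:ℝ)..T, u₂ t ⬝ᵥ y₂ t) ≥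
        -𝒱 0 - (lambar / (2 * lamC)) * (∫ t in (0:ℝ)..T, y₂ t ⬝ᵥ y₂ t) := by
  intro T hT
  have hy : Continuous y₂ := by
    rw [funext hy₂]
    exact hC.matrix_mulVec (Differentiable.continuous fun t => (hdyn t).differentiableAt)
  have h𝒱' : ∀ t, HasDerivAt 𝒱
      ((1 / 2 : ℝ) * (𝒳 t ⬝ᵥ ((P' t + P t * 𝔄 t + (𝔄 t)ᵀ * P t) *ᵥ 𝒳 t)) + u₂ t ⬝ᵥ y₂ t) t := by
    intro t
    rw [funext h𝒱, hy₂]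
    exact ((hasDerivAt_dotProduct_mulVec_self_of_dynamics (hPsymm t) (hPB t)
      (fun i j => hP' i j t) (hdyn t)).const_mul (1 / 2 : ℝ)).congr_deriv (by ring)
  have hdiss := sub_le_integral_add_const_mul_integral (c := lambar / (2 * lamC)) hT h𝒱'
    (hu.dotProduct hy) (hy.dotProduct hy) fun t => by
      linarith [hPbar t (𝒳 t),
        div_two_mul_le_div_mul_of_mul_le hlambar hlamC (hy₂ t ▸ hCbound t (𝒳 t))]
  have h𝒱T : 0 ≤ 𝒱 T := by
    rw [h𝒱]
    exact mul_nonneg (by norm_num)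
      (by simpa using (hPpos T).posSemidef.dotProduct_mulVec_nonneg (𝒳 T))
  linarith

/-- Output passivity shortfall of the time-varying impedance system:
`⟨y₂|u₂⟩_T ≥ −𝒱(0) − (λ̄/(2λ_C))‖y₂‖²_{2,T}`. -/
theorem time_varying_passivity_shortfall (m p : ℕ)
    (𝔄 : ℝ → Matrix (Fin m) (Fin m) ℝ)
    (𝔅 : Matrix (Fin m) (Fin p) ℝ)
    (ℭ : ℝ → Matrix (Fin p) (Fin m) ℝ)
    (P P' : ℝ → Matrix (Fin m) (Fin m) ℝ)
    (hPsymm : ∀ t, (P t).IsSymm) (hPpos : ∀ t, (P t).PosDef)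
    (hP' : ∀ i j t, HasDerivAt (fun s => P s i j) (P' t i j) t)
    (hPB : ∀ t, P t * 𝔅 = (ℭ t)ᵀ)
    (lambar lamC : ℝ) (hlambar : 0 ≤ lambar) (hlamC : 0 < lamC)
    (hPbar : ∀ (t : ℝ) (x : Fin m → ℝ),
      x ⬝ᵥ ((P' t + P t * 𝔄 t + (𝔄 t)ᵀ * P t) *ᵥ x) ≤ lambar * (x ⬝ᵥ x))
    (hCbound : ∀ (t : ℝ) (x : Fin m → ℝ),
      lamC * (x ⬝ᵥ x) ≤ (ℭ t *ᵥ x) ⬝ᵥ (ℭ t *ᵥ x))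
    (𝒳 : ℝ → (Fin m → ℝ)) (u₂ : ℝ → (Fin p → ℝ))
    (hA : Continuous 𝔄) (hC : Continuous ℭ) (hP'cont : Continuous P')
    (hu : Continuous u₂)
    (hdyn : ∀ t, HasDerivAt 𝒳 ((𝔄 t *ᵥ 𝒳 t) + (𝔅 *ᵥ u₂ t)) t)
    (y₂ : ℝ → (Fin p → ℝ)) (hy₂ : ∀ t, y₂ t = ℭ t *ᵥ 𝒳 t)
    (𝒱 : ℝ → ℝ) (h𝒱 : ∀ t, 𝒱 t = (1 / 2 : ℝ) * (𝒳 t ⬝ᵥ (P t *ᵥ 𝒳 t))) :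
    ∀ T : ℝ, 0 ≤ T →
      (∫ t in (0:ℝ)..T, u₂ t ⬝ᵥ y₂ t) ≥
        -𝒱 0 - (lambar / (2 * lamC)) * (∫ t in (0:ℝ)..T, y₂ t ⬝ᵥ y₂ t) :=
  time_varying_passivity_shortfall_general m p 𝔄 𝔅 ℭ P P' hPsymm hPpos hP' hPB lambar lamC hlambar
    hlamC hPbar hCbound 𝒳 u₂ hC hu hdyn y₂ hy₂ 𝒱 h𝒱
end
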